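/- Let s ≥ 2d + 2 and q ≥ 3. The number of s-tuples (a₁, …, a_s) ∈ (F_q*)^s such that (∏_{i=1}^{d-1}(a_i - a_{d-1+i})) · (a_{2d-1} - a_{2d} + a_{2d+1} - a_{2d+2}) ≠ 0 equals (q-2)^d (q-1)^{s-d} + (q-2)^d (q-1)^{s-d-2}. -/
import Mathlib

set_option linter.unreachableTactic false
set_option linter.unusedTactic false


lemma ncard_ne {α : Type*} [Finite α] (a : α) :
    Nat.card {x : α // x ≠ a} = Nat.card α - 1 := by
  classical
  cases nonempty_fintype α
  simp only [Nat.card_eq_fintype_card]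
  rw [show Fintype.card {x : α // x ≠ a} = Fintype.card {x : α // ¬ x = a} from rfl,
    Fintype.card_subtype_compl, Fintype.card_subtype_eq]

lemma ncard_ne2 {α : Type*} [Finite α] {a b : α} (h : a ≠ b) :
    Nat.card {x : α // x ≠ a ∧ x ≠ b} = Nat.card α - 2 := by
  have e : {x : α // x ≠ a ∧ x ≠ b} ≃ {y : {x : α // x ≠ a} // y ≠ ⟨b, h.symm⟩} :=
    { toFun := fun x => ⟨⟨x.1, x.2.1⟩, fun hy => x.2.2 (congrArg Subtype.val hy)⟩
      invFun := fun y => ⟨y.1.1, y.1.2, fun hy => y.2 (Subtype.ext hy)⟩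
      left_inv := fun _ => rfl
      right_inv := fun _ => rfl }
  rw [Nat.card_congr e, ncard_ne, ncard_ne]
  omega

lemma ncard_split {α : Type*} [Finite α] (P Q : α → Prop) :
    Nat.card {x // P x ∧ Q x} + Nat.card {x // P x ∧ ¬ Q x} = Nat.card {x // P x} := by
  classical
  cases nonempty_fintype α
  simp only [Nat.card_eq_fintype_card, Fintype.card_subtype]
  rw [← Finset.card_filter_add_card_filter_not (p := Q) (s := Finset.univ.filter P),
    Finset.filter_filter, Finset.filter_filter]

section FieldCounts

variable {F : Type*} [Field F] [Fintype F] {q : ℕ}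

lemma ncard_nz (hF : Fintype.card F = q) : Nat.card {x : F // x ≠ 0} = q - 1 := by
  rw [ncard_ne, Nat.card_eq_fintype_card, hF]

lemma ncard_pair (hF : Fintype.card F = q) :
    Nat.card {p : F × F // p.1 ≠ 0 ∧ p.2 ≠ 0 ∧ p.1 ≠ p.2} = (q - 1) * (q - 2) := by
  classical
  have e : {p : F × F // p.1 ≠ 0 ∧ p.2 ≠ 0 ∧ p.1 ≠ p.2} ≃
      Σ x : {x : F // x ≠ 0}, {y : F // y ≠ 0 ∧ y ≠ x.1} :=
    { toFun := fun p => ⟨⟨p.1.1, p.2.1⟩, ⟨p.1.2, p.2.2.1, fun h => p.2.2.2 h.symm⟩⟩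
      invFun := fun x => ⟨(x.1.1, x.2.1), x.1.2, x.2.2.1, fun h => x.2.2.2 h.symm⟩
      left_inv := fun _ => rfl
      right_inv := fun _ => rfl }
  have hx : ∀ x : {x : F // x ≠ 0}, Fintype.card {y : F // y ≠ 0 ∧ y ≠ x.1} = q - 2 := by
    intro x
    rw [← Nat.card_eq_fintype_card, ncard_ne2 (Ne.symm x.2), Nat.card_eq_fintype_card, hF]
  rw [Nat.card_congr e, Nat.card_eq_fintype_card, Fintype.card_sigma]
  simp only [hx, Finset.sum_const, Finset.card_univ, smul_eq_mul]
  rw [show Fintype.card {x : F // x ≠ 0} = q - 1 from by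
    rw [← Nat.card_eq_fintype_card, ncard_nz hF]]

lemma ncard_sum0 (hF : Fintype.card F = q) :
    Nat.card {p : F × F // (p.1 ≠ 0 ∧ p.2 ≠ 0) ∧ p.1 + p.2 = 0} = q - 1 := by
  have e : {p : F × F // (p.1 ≠ 0 ∧ p.2 ≠ 0) ∧ p.1 + p.2 = 0} ≃ {x : F // x ≠ 0} :=
    { toFun := fun p => ⟨p.1.1, p.2.1.1⟩
      invFun := fun x => ⟨(x.1, -x.1), ⟨x.2, neg_ne_zero.2 x.2⟩, add_neg_cancel _⟩
      left_inv := fun p => Subtype.ext (by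
        obtain ⟨⟨x, y⟩, ⟨hx, hy⟩, h⟩ := p
        have : -x = y := by linear_combination -h
        simp [this])
      right_inv := fun _ => rfl }
  rw [Nat.card_congr e, ncard_nz hF]

lemma ncard_nz2 (hF : Fintype.card F = q) :
    Nat.card {p : F × F // p.1 ≠ 0 ∧ p.2 ≠ 0} = (q - 1) * (q - 1) := by
  have e : {p : F × F // p.1 ≠ 0 ∧ p.2 ≠ 0} ≃ {x : F // x ≠ 0} × {x : F // x ≠ 0} :=
    { toFun := fun p => (⟨p.1.1, p.2.1⟩, ⟨p.1.2, p.2.2⟩)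
      invFun := fun x => ⟨(x.1.1, x.2.1), x.1.2, x.2.2⟩
      left_inv := fun _ => rfl
      right_inv := fun _ => rfl }
  rw [Nat.card_congr e, Nat.card_prod, ncard_nz hF]

lemma ncard_sumne (hF : Fintype.card F = q) :
    Nat.card {p : F × F // p.1 ≠ 0 ∧ p.2 ≠ 0 ∧ p.1 + p.2 ≠ 0} =
      (q - 1) * (q - 1) - (q - 1) := by
  have key := ncard_split (fun p : F × F => p.1 ≠ 0 ∧ p.2 ≠ 0) (fun p => p.1 + p.2 = 0)
  rw [ncard_nz2 hF] at key
  have e1 : Nat.card {p : F × F // (p.1 ≠ 0 ∧ p.2 ≠ 0) ∧ ¬ p.1 + p.2 = 0} =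
      Nat.card {p : F × F // p.1 ≠ 0 ∧ p.2 ≠ 0 ∧ p.1 + p.2 ≠ 0} :=
    Nat.card_congr (Equiv.subtypeEquivRight (by tauto))
  rw [e1, ncard_sum0 hF] at key
  omega

lemma ncard_nz3 (hF : Fintype.card F = q) :
    Nat.card {p : F × F × F // p.1 ≠ 0 ∧ p.2.1 ≠ 0 ∧ p.2.2 ≠ 0} = (q-1)*((q-1)*(q-1)) := by
  have e : {p : F × F × F // p.1 ≠ 0 ∧ p.2.1 ≠ 0 ∧ p.2.2 ≠ 0} ≃
      {x : F // x ≠ 0} × {x : F // x ≠ 0} × {x : F // x ≠ 0} :=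
    { toFun := fun p => (⟨p.1.1, p.2.1⟩, ⟨p.1.2.1, p.2.2.1⟩, ⟨p.1.2.2, p.2.2.2⟩)
      invFun := fun x => ⟨(x.1.1, x.2.1.1, x.2.2.1), x.1.2, x.2.1.2, x.2.2.2⟩
      left_inv := fun _ => rfl
      right_inv := fun _ => rfl }
  rw [Nat.card_congr e, Nat.card_prod, Nat.card_prod, ncard_nz hF]

lemma ncard_tripA (hF : Fintype.card F = q) :
    Nat.card {p : F × F × F // (p.1 ≠ 0 ∧ p.2.1 ≠ 0 ∧ p.2.2 ≠ 0) ∧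
        p.1 - p.2.1 + p.2.2 = 0} = (q - 1) * (q - 1) - (q - 1) := by
  have e : {p : F × F × F // (p.1 ≠ 0 ∧ p.2.1 ≠ 0 ∧ p.2.2 ≠ 0) ∧ p.1 - p.2.1 + p.2.2 = 0} ≃
      {r : F × F // r.1 ≠ 0 ∧ r.2 ≠ 0 ∧ r.1 + r.2 ≠ 0} :=
    { toFun := fun p => ⟨(p.1.1, p.1.2.2), p.2.1.1, p.2.1.2.2, by
        have h := p.2.2
        have hy := p.2.1.2.1
        intro hc
        exact hy (by linear_combination hc - h)⟩
      invFun := fun r => ⟨(r.1.1, r.1.1 + r.1.2, r.1.2), ⟨r.2.1, r.2.2.2, r.2.2.1⟩, by ring⟩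
      left_inv := fun p => Subtype.ext (by
        obtain ⟨⟨x, y, z⟩, hp, h⟩ := p
        have : x + z = y := by linear_combination h
        simp [this])
      right_inv := fun _ => rfl }
  rw [Nat.card_congr e, ncard_sumne hF]

lemma ncard_quad (hq : 3 ≤ q) (hF : Fintype.card F = q) :
    Nat.card {t : F × F × F × F // (t.1 ≠ 0 ∧ t.2.1 ≠ 0 ∧ t.2.2.1 ≠ 0 ∧ t.2.2.2 ≠ 0) ∧
        t.1 - t.2.1 + t.2.2.1 - t.2.2.2 ≠ 0} = (q-1)*(q-2)*((q-1)^2+1) := by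
  classical
  set U := {p : F × F × F // p.1 ≠ 0 ∧ p.2.1 ≠ 0 ∧ p.2.2 ≠ 0} with hU
  have e : {t : F × F × F × F // (t.1 ≠ 0 ∧ t.2.1 ≠ 0 ∧ t.2.2.1 ≠ 0 ∧ t.2.2.2 ≠ 0) ∧
        t.1 - t.2.1 + t.2.2.1 - t.2.2.2 ≠ 0} ≃
      Σ u : U, {w : F // w ≠ 0 ∧ w ≠ u.1.1 - u.1.2.1 + u.1.2.2} :=
    { toFun := fun t => ⟨⟨(t.1.1, t.1.2.1, t.1.2.2.1), t.2.1.1, t.2.1.2.1, t.2.1.2.2.1⟩,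
        ⟨t.1.2.2.2, t.2.1.2.2.2, Ne.symm (sub_ne_zero.mp t.2.2)⟩⟩
      invFun := fun u => ⟨(u.1.1.1, u.1.1.2.1, u.1.1.2.2, u.2.1),
        ⟨u.1.2.1, u.1.2.2.1, u.1.2.2.2, u.2.2.1⟩, sub_ne_zero.mpr (Ne.symm u.2.2.2)⟩
      left_inv := fun _ => rfl
      right_inv := fun _ => rfl }
  have hin : ∀ u : U, Fintype.card {w : F // w ≠ 0 ∧ w ≠ u.1.1 - u.1.2.1 + u.1.2.2} =
      if u.1.1 - u.1.2.1 + u.1.2.2 = 0 then q - 1 else q - 2 := by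
    intro u
    split_ifs with h
    · rw [← Nat.card_eq_fintype_card,
        Nat.card_congr (Equiv.subtypeEquivRight (q := fun w : F => w ≠ 0) (by
          intro w; rw [h]; tauto)), ncard_nz hF]
    · rw [← Nat.card_eq_fintype_card, ncard_ne2 (Ne.symm h), Nat.card_eq_fintype_card, hF]
  rw [Nat.card_congr e, Nat.card_eq_fintype_card, Fintype.card_sigma]
  simp only [hin]
  rw [Finset.sum_ite, Finset.sum_const, Finset.sum_const, smul_eq_mul, smul_eq_mul]
  have hA : (Finset.univ.filter (fun u : U => u.1.1 - u.1.2.1 + u.1.2.2 = 0)).card =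
      (q - 1) * (q - 1) - (q - 1) := by
    rw [← Fintype.card_subtype, ← Nat.card_eq_fintype_card,
      Nat.card_congr (Equiv.subtypeSubtypeEquivSubtypeInter
        (fun p : F × F × F => p.1 ≠ 0 ∧ p.2.1 ≠ 0 ∧ p.2.2 ≠ 0)
        (fun p => p.1 - p.2.1 + p.2.2 = 0)), ncard_tripA hF]
  have hB : (Finset.univ.filter (fun u : U => ¬ (u.1.1 - u.1.2.1 + u.1.2.2 = 0))).card =
      (q-1)*((q-1)*(q-1)) - ((q - 1) * (q - 1) - (q - 1)) := by
    have := Finset.card_filter_add_card_filter_not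
      (s := (Finset.univ : Finset U)) (p := fun u : U => u.1.1 - u.1.2.1 + u.1.2.2 = 0)
    rw [hA, Finset.card_univ, ← Nat.card_eq_fintype_card,
      show Nat.card U = (q-1)*((q-1)*(q-1)) from ncard_nz3 hF] at this
    omega
  rw [hA, hB]
  obtain ⟨m, rfl⟩ : ∃ m, q = m + 3 := ⟨q - 3, by omega⟩
  simp only [show m + 3 - 1 = m + 2 from rfl, show m + 3 - 2 = m + 1 from rfl]
  have h1 : (m+2)*(m+2) - (m+2) = (m+2)*(m+1) := by
    have : (m+2)*(m+2) = (m+2)*(m+1) + (m+2) := by ring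
    omega
  rw [h1]
  have h2 : (m+2)*((m+2)*(m+2)) - (m+2)*(m+1) = (m+2)*(m^2+3*m+3) := by
    have : (m+2)*((m+2)*(m+2)) = (m+2)*(m+1) + (m+2)*(m^2+3*m+3) := by ring
    omega
  rw [h2]
  ring
end FieldCounts

section Main

variable {F : Type*} [Field F] (d s : ℕ)

def recon0 (hd : 1 ≤ d) (hs : 2*d+2 ≤ s)
    (a : Fin (d-1) → {p : F × F // p.1 ≠ 0 ∧ p.2 ≠ 0 ∧ p.1 ≠ p.2})
    (b : {t : F × F × F × F // (t.1 ≠ 0 ∧ t.2.1 ≠ 0 ∧ t.2.2.1 ≠ 0 ∧ t.2.2.2 ≠ 0) ∧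
        t.1 - t.2.1 + t.2.2.1 - t.2.2.2 ≠ 0})
    (c : Fin (s-(2*d+2)) → {x : F // x ≠ 0}) (j : ℕ) (hj : j < s) : F :=
  if h1 : j < d - 1 then (a ⟨j, h1⟩).1.1
  else if h2 : j < 2*d - 2 then (a ⟨j - (d-1), by omega⟩).1.2
  else if h3 : j = 2*d - 2 then b.1.1
  else if h4 : j = 2*d - 1 then b.1.2.1
  else if h5 : j = 2*d then b.1.2.2.1
  else if h6 : j = 2*d + 1 then b.1.2.2.2
  else (c ⟨j - (2*d+2), by omega⟩).1

variable (hd : 1 ≤ d) (hs : 2*d+2 ≤ s)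
  (a : Fin (d-1) → {p : F × F // p.1 ≠ 0 ∧ p.2 ≠ 0 ∧ p.1 ≠ p.2})
  (b : {t : F × F × F × F // (t.1 ≠ 0 ∧ t.2.1 ≠ 0 ∧ t.2.2.1 ≠ 0 ∧ t.2.2.2 ≠ 0) ∧
        t.1 - t.2.1 + t.2.2.1 - t.2.2.2 ≠ 0})
  (c : Fin (s-(2*d+2)) → {x : F // x ≠ 0})

lemma recon0_p1 (i : Fin (d-1)) (h : i.val < s) :
    recon0 d s hd hs a b c i.val h = (a i).1.1 := by
  simp only [recon0]
  rw [dif_pos i.isLt]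

lemma recon0_p2 (i : Fin (d-1)) (h : d-1+i.val < s) :
    recon0 d s hd hs a b c (d-1+i.val) h = (a i).1.2 := by
  simp only [recon0]
  rw [dif_neg (by omega), dif_pos (show d-1+i.val < 2*d-2 by omega)]
  simp [Nat.add_sub_cancel_left]

lemma recon0_q1 (h : 2*d-2 < s) : recon0 d s hd hs a b c (2*d-2) h = b.1.1 := by
  simp only [recon0]
  rw [dif_neg (by omega), dif_neg (by omega)]
  simp

lemma recon0_q2 (h : 2*d-1 < s) : recon0 d s hd hs a b c (2*d-1) h = b.1.2.1 := by
  simp only [recon0]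
  rw [dif_neg (by omega), dif_neg (by omega), dif_neg (by omega)]
  simp

lemma recon0_q3 (h : 2*d < s) : recon0 d s hd hs a b c (2*d) h = b.1.2.2.1 := by
  simp only [recon0]
  rw [dif_neg (by omega), dif_neg (by omega), dif_neg (by omega), dif_neg (by omega)]
  simp

lemma recon0_q4 (h : 2*d+1 < s) : recon0 d s hd hs a b c (2*d+1) h = b.1.2.2.2 := by
  simp only [recon0]
  rw [dif_neg (by omega), dif_neg (by omega), dif_neg (by omega), dif_neg (by omega),
    dif_neg (by omega)]
  simp

lemma recon0_rest (k : Fin (s-(2*d+2))) (h : 2*d+2+k.val < s) :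
    recon0 d s hd hs a b c (2*d+2+k.val) h = (c k).1 := by
  simp only [recon0]
  rw [dif_neg (by omega), dif_neg (by omega), dif_neg (by omega), dif_neg (by omega),
    dif_neg (by omega), dif_neg (by omega)]
  simp [Nat.add_sub_cancel_left]

lemma recon0_nz (j : ℕ) (hj : j < s) : recon0 d s hd hs a b c j hj ≠ 0 := by
  simp only [recon0]
  split_ifs
  · exact (a _).2.1
  · exact (a _).2.2.1
  · exact b.2.1.1
  · exact b.2.1.2.1
  · exact b.2.1.2.2.1
  · exact b.2.1.2.2.2
  · exact (c _).2

def bigEquiv (hd : 1 ≤ d) (hs : 2*d+2 ≤ s) :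
    {v : Fin s → F //
        (∀ i, v i ≠ 0) ∧
        (∀ i : Fin (d-1), v ⟨i.val, by omega⟩ ≠ v ⟨d-1+i.val, by omega⟩) ∧
        (v ⟨2*d-2, by omega⟩ - v ⟨2*d-1, by omega⟩ + v ⟨2*d, by omega⟩
          - v ⟨2*d+1, by omega⟩ ≠ 0)} ≃
    (Fin (d-1) → {p : F × F // p.1 ≠ 0 ∧ p.2 ≠ 0 ∧ p.1 ≠ p.2}) ×
    {t : F × F × F × F // (t.1 ≠ 0 ∧ t.2.1 ≠ 0 ∧ t.2.2.1 ≠ 0 ∧ t.2.2.2 ≠ 0) ∧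
        t.1 - t.2.1 + t.2.2.1 - t.2.2.2 ≠ 0} ×
    (Fin (s-(2*d+2)) → {x : F // x ≠ 0}) where
  toFun v :=
    (fun i => ⟨(v.1 ⟨i.val, by omega⟩, v.1 ⟨d-1+i.val, by omega⟩),
        v.2.1 _, v.2.1 _, v.2.2.1 i⟩,
     ⟨(v.1 ⟨2*d-2, by omega⟩, v.1 ⟨2*d-1, by omega⟩, v.1 ⟨2*d, by omega⟩,
        v.1 ⟨2*d+1, by omega⟩),
        ⟨v.2.1 _, v.2.1 _, v.2.1 _, v.2.1 _⟩, v.2.2.2⟩,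
     fun k => ⟨v.1 ⟨2*d+2+k.val, by omega⟩, v.2.1 _⟩)
  invFun t :=
    ⟨fun j => recon0 d s hd hs t.1 t.2.1 t.2.2 j.val j.isLt, by
      refine ⟨fun j => recon0_nz d s hd hs t.1 t.2.1 t.2.2 j.val j.isLt, fun i => ?_, ?_⟩
      · show recon0 d s hd hs t.1 t.2.1 t.2.2 i.val (by omega) ≠
          recon0 d s hd hs t.1 t.2.1 t.2.2 (d-1+i.val) (by omega)
        rw [recon0_p1 d s hd hs t.1 t.2.1 t.2.2 i, recon0_p2 d s hd hs t.1 t.2.1 t.2.2 i]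
        exact (t.1 i).2.2.2
      · show recon0 d s hd hs t.1 t.2.1 t.2.2 (2*d-2) (by omega)
          - recon0 d s hd hs t.1 t.2.1 t.2.2 (2*d-1) (by omega)
          + recon0 d s hd hs t.1 t.2.1 t.2.2 (2*d) (by omega)
          - recon0 d s hd hs t.1 t.2.1 t.2.2 (2*d+1) (by omega) ≠ 0
        rw [recon0_q1 d s hd hs t.1 t.2.1 t.2.2, recon0_q2 d s hd hs t.1 t.2.1 t.2.2, recon0_q3 d s hd hs t.1 t.2.1 t.2.2, recon0_q4 d s hd hs t.1 t.2.1 t.2.2]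
        exact t.2.1.2.2⟩
  left_inv v := by
    refine Subtype.ext (funext fun j => ?_)
    simp only [recon0]
    split_ifs with h1 h2 h3 h4 h5 h6 <;>
      exact congrArg v.1 (Fin.ext (by
        first
        | (simp only [Fin.val_mk]; omega)
        | simp only [Fin.val_mk]
        | omega))
  right_inv t := by
    obtain ⟨a, b, c⟩ := t
    refine Prod.ext ?_ (Prod.ext ?_ ?_)
    · funext i
      refine Subtype.ext (Prod.ext ?_ ?_)
      · exact recon0_p1 d s hd hs a b c i (by omega)
      · exact recon0_p2 d s hd hs a b c i (by omega)
    · refine Subtype.ext (Prod.ext ?_ (Prod.ext ?_ (Prod.ext ?_ ?_)))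
      · exact recon0_q1 d s hd hs a b c (by omega)
      · exact recon0_q2 d s hd hs a b c (by omega)
      · exact recon0_q3 d s hd hs a b c (by omega)
      · exact recon0_q4 d s hd hs a b c (by omega)
    · funext k
      exact Subtype.ext (recon0_rest d s hd hs a b c k (by omega))

end Main

/-- For `s ≥ 2d + 2`, the number of `s`-tuples `(a₁, …, a_s) ∈ (F_q*)^s` with
`(∏_{i=1}^{d-1}(a_i - a_{d-1+i})) ⋅ (a_{2d-1} - a_{2d} + a_{2d+1} - a_{2d+2}) ≠ 0`
equals `(q-2)^d (q-1)^{s-d} + (q-2)^d (q-1)^{s-d-2}`.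
(Indices are 0-based: the paper's `a_k` is `v ⟨k-1, _⟩`.) -/
theorem stmt_4 (q d s : ℕ) (hq : 3 ≤ q) (hd : 1 ≤ d) (hs : 2 * d + 2 ≤ s)
    (F : Type*) [Field F] [Fintype F] (hF : Fintype.card F = q) :
    Nat.card {v : Fin s → F //
        (∀ i, v i ≠ 0) ∧
        (∏ i : Fin (d - 1),
            (v ⟨i.val, by omega⟩ - v ⟨d - 1 + i.val, by have := i.isLt; omega⟩)) *
          (v ⟨2 * d - 2, by omega⟩ - v ⟨2 * d - 1, by omega⟩
            + v ⟨2 * d, by omega⟩ - v ⟨2 * d + 1, by omega⟩) ≠ 0}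
      = (q - 2) ^ d * (q - 1) ^ (s - d) + (q - 2) ^ d * (q - 1) ^ (s - d - 2) := by
  classical
  have e1 : {v : Fin s → F //
        (∀ i, v i ≠ 0) ∧
        (∏ i : Fin (d - 1),
            (v ⟨i.val, by omega⟩ - v ⟨d - 1 + i.val, by have := i.isLt; omega⟩)) *
          (v ⟨2 * d - 2, by omega⟩ - v ⟨2 * d - 1, by omega⟩
            + v ⟨2 * d, by omega⟩ - v ⟨2 * d + 1, by omega⟩) ≠ 0} ≃
      {v : Fin s → F //
        (∀ i, v i ≠ 0) ∧
        (∀ i : Fin (d-1), v ⟨i.val, by omega⟩ ≠ v ⟨d-1+i.val, by omega⟩) ∧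
        (v ⟨2*d-2, by omega⟩ - v ⟨2*d-1, by omega⟩ + v ⟨2*d, by omega⟩
          - v ⟨2*d+1, by omega⟩ ≠ 0)} := by
    refine Equiv.subtypeEquivRight fun v => ?_
    rw [mul_ne_zero_iff, Finset.prod_ne_zero_iff]
    constructor
    · rintro ⟨h0, hp, hl⟩
      exact ⟨h0, fun i => sub_ne_zero.mp (hp i (Finset.mem_univ i)), hl⟩
    · rintro ⟨h0, hp, hl⟩
      exact ⟨h0, fun i _ => sub_ne_zero.mpr (hp i), hl⟩
  refine (Nat.card_congr (e1.trans (bigEquiv d s hd hs hd hs))).trans ?_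
  rw [Nat.card_prod, Nat.card_prod, Nat.card_fun, Nat.card_fun, ncard_pair hF,
    ncard_quad hq hF, ncard_nz hF]
  simp only [Nat.card_eq_fintype_card, Fintype.card_fin]
  obtain ⟨e, rfl⟩ : ∃ e, d = e + 1 := ⟨d - 1, by omega⟩
  obtain ⟨r, rfl⟩ : ∃ r, s = 2*(e+1)+2+r := ⟨s - (2*(e+1)+2), by omega⟩
  obtain ⟨m, rfl⟩ : ∃ m, q = m + 3 := ⟨q - 3, by omega⟩
  rw [show (2*(e+1)+2+r) - (2*(e+1)+2) = r from by omega,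
      show e+1-1 = e from by omega,
      show (2*(e+1)+2+r) - (e+1) = e+3+r from by omega,
      show e+3+r-2 = e+1+r from by omega,
      show m+3-1 = m+2 from by omega, show m+3-2 = m+1 from by omega,
      mul_pow]
  ring
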